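/- arXiv:2412.02598 — 5 statements merged into one kernel-verified Lean document; each statement's English description precedes it below -/
import Mathlib

section
/- The T-product of two tensors X ∈ ℝ^{I1×I2×I3} and Y ∈ ℝ^{I2×I4×I3} can be computed slice-wise in the Fourier domain: if Ĉ(:,:,i) = X̂(:,:,i)·Ŷ(:,:,i) for all i, where ·̂ denotes the mode-3 DFT, then C = ifft(Ĉ,[],3) equals the T-product X*Y defined via the block-circulant matrix construction. -/
open scoped BigOperators

namespace TProd

/-- A third-order tensor given by its frontal slices, indexed cyclically by `ZMod n`. -/
abbrev Tensor (a b n : ℕ) := ZMod n → Matrix (Fin a) (Fin b) ℝ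

/-- The T-product of two third-order tensors (block-circulant construction:
`(X*Y)(k) = ∑ j, X(k−j) ⬝ Y(j)`). -/
noncomputable def tprod {a b c n : ℕ} [NeZero n] (X : Tensor a b n) (Y : Tensor b c n) :
    Tensor a c n :=
  fun k => ∑ j : ZMod n, X (k - j) * Y j

/-- The tensor transpose: transpose each frontal slice and reverse the order of
slices 2 through n. -/
def ttrans {a b n : ℕ} (X : Tensor a b n) : Tensor b a n := fun k => (X (-k)).transpose

/-- The identity tensor: first frontal slice the identity matrix, all others zero. -/
def tid (a n : ℕ) : Tensor a a n := fun k => if k = 0 then 1 else 0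

/-- Squared Frobenius norm of a tensor. -/
def frobSq {a b n : ℕ} [NeZero n] (X : Tensor a b n) : ℝ :=
  ∑ k : ZMod n, ∑ i, ∑ j, (X k i j) ^ 2

/-- Frobenius norm of a tensor. -/
noncomputable def frobNorm {a b n : ℕ} [NeZero n] (X : Tensor a b n) : ℝ :=
  Real.sqrt (frobSq X)

/-- Mode-3 discrete Fourier transform: the i-th Fourier-domain frontal slice. -/
noncomputable def dft {a b n : ℕ} [NeZero n] (X : Tensor a b n) : ZMod n → Matrix (Fin a) (Fin b) ℂ :=
  fun i => ∑ k : ZMod n,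
    Complex.exp (-2 * Real.pi * Complex.I * ((i.val : ℂ) * (k.val : ℂ)) / (n : ℂ)) •
      (X k).map (fun x => (x : ℂ))

/-- A tensor is f-diagonal if all its frontal slices are diagonal matrices. -/
def fDiag {a b n : ℕ} (S : Tensor a b n) : Prop :=
  ∀ k : ZMod n, ∀ i : Fin a, ∀ j : Fin b, (i : ℕ) ≠ (j : ℕ) → S k i j = 0

/-- Orthogonality under the T-product. -/
def Orthogonal {a n : ℕ} [NeZero n] (U : Tensor a a n) : Prop :=
  tprod (ttrans U) U = tid a n ∧ tprod U (ttrans U) = tid a n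

/-- The four tensor Penrose equations: `A` is a Moore–Penrose pseudoinverse of `X`. -/
def IsMP {a b n : ℕ} [NeZero n] (X : Tensor a b n) (A : Tensor b a n) : Prop :=
  tprod (tprod A X) A = A ∧
  tprod (tprod X A) X = X ∧
  ttrans (tprod X A) = tprod X A ∧
  ttrans (tprod A X) = tprod A X

/-- The block-circulant matrix of a tensor. -/
def circ {a b n : ℕ} (X : Tensor a b n) :
    Matrix (ZMod n × Fin a) (ZMod n × Fin b) ℝ :=
  Matrix.of fun p q => X (p.1 - q.1) p.2 q.2

end TProd

open TProd

/-!
The T-product is a cyclic convolution `k ↦ ∑ j, X (k - j) * Y j` of frontal slices, and the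
mode-3 DFT is Mathlib's `ZMod.dft` applied to the complexified slices. Since the standard
additive character turns the shift `k = (k - j) + j` into a product of phases, the DFT of a
convolution is the slicewise product of the DFTs; as `ZMod.dft` is a linear equivalence and
`ℝ → ℂ` is injective, a tensor is determined by its DFT.
-/

open ZMod

lemma ZMod.stdAddChar_neg_mul_eq_exp {n : ℕ} [NeZero n] (k i : ZMod n) :
    stdAddChar (-(k * i)) =
      Complex.exp (-2 * Real.pi * Complex.I * ((i.val : ℂ) * (k.val : ℂ)) / (n : ℂ)) := by
  have h : -(k * i) = ((-(k.val * i.val : ℤ) : ℤ) : ZMod n) := by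
    push_cast
    simp only [natCast_val, cast_id', id_eq]
  rw [h, stdAddChar_coe]
  push_cast
  ring_nf

lemma ZMod.dft_matrix_conv {N : ℕ} [NeZero N] {l m p : Type*} [Fintype m]
    (Φ : ZMod N → Matrix l m ℂ) (Ψ : ZMod N → Matrix m p ℂ) (i : ZMod N) :
    𝓕 (fun k => ∑ j, Φ (k - j) * Ψ j) i = 𝓕 Φ i * 𝓕 Ψ i := by
  simp only [dft_apply, Finset.smul_sum, Matrix.sum_mul, Matrix.mul_sum]
  rw [Finset.sum_comm]
  refine Finset.sum_congr rfl fun j _ => ?_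
  refine Fintype.sum_equiv (Equiv.subRight j) _ _ fun k => ?_
  have hχ : stdAddChar (-(k * i)) =
      stdAddChar (-((k - j) * i)) * stdAddChar (-(j * i)) := by
    rw [← AddChar.map_add_eq_mul]
    ring_nf
  rw [Equiv.subRight_apply, hχ, Matrix.smul_mul, Matrix.mul_smul, smul_smul, mul_comm]

namespace TProd

lemma dft_eq_zmod_dft {a b n : ℕ} [NeZero n] (X : Tensor a b n) :
    dft X = 𝓕 (fun k => (X k).map ((↑) : ℝ → ℂ)) := by
  funext i
  simp only [dft, dft_apply, stdAddChar_neg_mul_eq_exp]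

lemma dft_injective {a b n : ℕ} [NeZero n] :
    Function.Injective (dft : Tensor a b n → ZMod n → Matrix (Fin a) (Fin b) ℂ) := by
  intro X Y h
  rw [dft_eq_zmod_dft, dft_eq_zmod_dft] at h
  funext k
  exact Matrix.map_injective Complex.ofReal_injective (congrFun (ZMod.dft.injective h) k)

lemma map_ofReal_tprod {a b c n : ℕ} [NeZero n] (X : Tensor a b n) (Y : Tensor b c n)
    (k : ZMod n) :
    (tprod X Y k).map ((↑) : ℝ → ℂ) =
      ∑ j, (X (k - j)).map ((↑) : ℝ → ℂ) * (Y j).map ((↑) : ℝ → ℂ) := by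
  ext p q
  simp only [tprod, Matrix.map_apply, Matrix.sum_apply, Matrix.mul_apply, Complex.ofReal_sum,
    Complex.ofReal_mul]

lemma dft_tprod {a b c n : ℕ} [NeZero n] (X : Tensor a b n) (Y : Tensor b c n) (i : ZMod n) :
    dft (tprod X Y) i = dft X i * dft Y i := by
  simp only [dft_eq_zmod_dft, map_ofReal_tprod]
  exact dft_matrix_conv (fun k => (X k).map (↑)) (fun k => (Y k).map (↑)) i

end TProd

/-- slicewise products in the Fourier domain compute the T-product. -/
theorem tprod_eq_of_dft_mul (I1 I2 I4 I3 : ℕ) [NeZero I3]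
    (X : Tensor I1 I2 I3) (Y : Tensor I2 I4 I3) (C : Tensor I1 I4 I3)
    (hC : ∀ i : ZMod I3, dft C i = dft X i * dft Y i) :
    C = tprod X Y :=
  dft_injective <| funext fun i => by rw [hC, dft_tprod]
end

section
/- The tensor transpose reverses the T-product: (X*Y)^T = Y^T * X^T for tensors X ∈ ℝ^{I1×I2×I3} and Y ∈ ℝ^{I2×I4×I3}. -/
open scoped BigOperators

open TProd

/-- (X*Y)ᵀ = Yᵀ * Xᵀ. -/
theorem ttrans_tprod (I1 I2 I4 I3 : ℕ) [NeZero I3]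
    (X : Tensor I1 I2 I3) (Y : Tensor I2 I4 I3) :
    ttrans (tprod X Y) = tprod (ttrans Y) (ttrans X) := by
  funext k
  simp only [ttrans, TProd.tprod, Matrix.transpose_sum, Matrix.transpose_mul]
  refine Fintype.sum_equiv (Equiv.addLeft k) _ _ fun j => ?_
  rw [Equiv.coe_addLeft, sub_add_cancel_left, neg_neg, neg_add']
end

section
/- Every symmetric tensor X ∈ ℝ^{I×I×I3} (i.e., X^T = X) admits a T-eigendecomposition X = V * D * V^T where V is orthogonal under the T-product (V^T*V = V*V^T = I) and D is f-diagonal (every frontal slice of D in the Fourier domain is diagonal). -/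
open scoped BigOperators

open TProd

set_option linter.unusedSectionVars false

namespace TEig
variable (n : ℕ) [NeZero n]

noncomputable def chn (a : ℕ) : ℂ := Complex.exp (-2 * Real.pi * Complex.I * (a : ℂ) / n)

lemma chn_alt (a : ℕ) : chn n a = Complex.exp (((-2 * Real.pi * a / n : ℝ) : ℂ) * Complex.I) := by
  rw [chn]; congr 1; push_cast; ring

lemma chn_add (a b : ℕ) : chn n (a + b) = chn n a * chn n b := by
  rw [chn, chn, chn, ← Complex.exp_add]; congr 1; push_cast; ring

lemma chn_zero : chn n 0 = 1 := by simp [chn]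

lemma chn_mul_n (m : ℕ) : chn n (n * m) = 1 := by
  have hn : (n : ℂ) ≠ 0 := Nat.cast_ne_zero.mpr (NeZero.ne n)
  rw [chn]
  have : -2 * (Real.pi : ℂ) * Complex.I * ((n * m : ℕ) : ℂ) / n
      = (-m : ℤ) * (2 * Real.pi * Complex.I) := by
    push_cast; field_simp
  rw [this, Complex.exp_int_mul_two_pi_mul_I]

lemma chn_mod (a : ℕ) : chn n (a % n) = chn n a := by
  conv_rhs => rw [← Nat.div_add_mod a n]
  rw [Nat.add_comm, chn_add, chn_mul_n, mul_one]

noncomputable def ch (m : ZMod n) : ℂ := chn n m.val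

lemma ch_add (j k : ZMod n) : ch n (j + k) = ch n j * ch n k := by
  rw [ch, ch, ch, ZMod.val_add, chn_mod, chn_add]

lemma ch_zero : ch n 0 = 1 := by simp [ch, chn]

lemma ch_neg_mul (j : ZMod n) : ch n (-j) * ch n j = 1 := by
  rw [← ch_add, neg_add_cancel, ch_zero]

lemma ch_conj (j : ZMod n) : (starRingEnd ℂ) (ch n j) = ch n (-j) := by
  have h1 : (starRingEnd ℂ) (ch n j) * ch n j = 1 := by
    rw [ch, chn_alt, ← Complex.exp_conj, map_mul, Complex.conj_I, Complex.conj_ofReal,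
      mul_neg, ← Complex.exp_add]
    rw [show -(((-2 * Real.pi * (j.val:ℝ) / n : ℝ):ℂ) * Complex.I) +
        ((-2 * Real.pi * (j.val:ℝ) / n : ℝ):ℂ) * Complex.I = 0 by ring, Complex.exp_zero]
  have h2 := ch_neg_mul n j
  rw [eq_inv_of_mul_eq_one_left h1, eq_inv_of_mul_eq_one_left h2]

lemma ch_ne_one {j : ZMod n} (hj : j ≠ 0) : ch n j ≠ 1 := by
  intro h
  rw [ch, chn_alt, Complex.exp_eq_one_iff] at h
  obtain ⟨m, hm⟩ := h
  have hn : (0:ℝ) < n := by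
    have := Nat.pos_of_ne_zero (NeZero.ne n); exact_mod_cast this
  have hpi := Real.pi_pos
  have him : -2 * Real.pi * (j.val : ℝ) / n = m * (2 * Real.pi) := by
    have := congrArg Complex.im hm
    simpa using this
  rw [div_eq_iff (ne_of_gt hn)] at him
  have hv1 : 0 < j.val := Nat.pos_of_ne_zero (fun h0 => hj ((ZMod.val_eq_zero j).mp h0))
  have hv1' : (0:ℝ) < (j.val : ℝ) := by exact_mod_cast hv1
  have hv2 : (j.val : ℝ) < n := by exact_mod_cast ZMod.val_lt j
  have h2 : (2*Real.pi) * (-((j.val:ℝ))) = (2*Real.pi) * ((m:ℝ) * n) := by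
    linear_combination him
  have key : -((j.val:ℝ)) = (m:ℝ) * n :=
    mul_left_cancel₀ (by positivity) h2
  have hm0 : m < 0 := by
    by_contra h'
    push_neg at h'
    have : (0:ℝ) ≤ (m:ℝ) := by exact_mod_cast h'
    nlinarith
  have hm1 : (m:ℝ) ≤ -1 := by exact_mod_cast (by omega : m ≤ -1)
  nlinarith

lemma sum_ch (j : ZMod n) : ∑ k : ZMod n, ch n (j * k) = if j = 0 then (n : ℂ) else 0 := by
  split_ifs with h
  · simp [h, ch_zero, Finset.card_univ]
  · have key : ch n j * ∑ k : ZMod n, ch n (j * k) = ∑ k : ZMod n, ch n (j * k) := by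
      rw [Finset.mul_sum]
      calc ∑ k : ZMod n, ch n j * ch n (j * k)
          = ∑ k : ZMod n, ch n (j * (k + 1)) := Finset.sum_congr rfl (fun k _ => by
            rw [mul_add, mul_one, ch_add, mul_comm])
        _ = ∑ k : ZMod n, ch n (j * k) :=
            Fintype.sum_equiv (Equiv.addRight 1) _ _ (fun k => rfl)
    have h2 : (ch n j - 1) * ∑ k : ZMod n, ch n (j * k) = 0 := by linear_combination key
    rcases mul_eq_zero.mp h2 with h3 | h3
    · exact absurd (sub_eq_zero.mp h3) (ch_ne_one n h)
    · exact h3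

end TEig

namespace TEig2
open TEig TProd Matrix

variable {a b c n : ℕ} [NeZero n]

lemma dft_apply (X : Tensor a b n) (i : ZMod n) (p : Fin a) (q : Fin b) :
    dft X i p q = ∑ k : ZMod n, ch n (i * k) * (X k p q : ℂ) := by
  rw [dft, Matrix.sum_apply]
  refine Finset.sum_congr rfl fun k _ => ?_
  rw [Matrix.smul_apply, Matrix.map_apply, smul_eq_mul]
  congr 1
  rw [ch, ZMod.val_mul, chn_mod, chn]
  congr 1
  push_cast
  ring

lemma dft_tprod (X : Tensor a b n) (Y : Tensor b c n) (i : ZMod n) :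
    dft (TProd.tprod X Y) i = dft X i * dft Y i := by
  ext p q
  rw [dft_apply, Matrix.mul_apply]
  have lhs : ∑ k : ZMod n, ch n (i * k) * ((TProd.tprod X Y) k p q : ℂ)
      = ∑ k : ZMod n, ∑ j : ZMod n, ∑ m : Fin b,
          ch n (i * k) * ((X (k - j) p m : ℂ) * (Y j m q : ℂ)) := by
    refine Finset.sum_congr rfl fun k _ => ?_
    simp only [TProd.tprod, Matrix.sum_apply, Matrix.mul_apply]
    push_cast
    rw [Finset.mul_sum]
    refine Finset.sum_congr rfl fun j _ => ?_
    rw [Finset.mul_sum]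
  have rhs : ∑ m : Fin b, dft X i p m * dft Y i m q
      = ∑ m : Fin b, ∑ j : ZMod n, ∑ l : ZMod n,
          (ch n (i * l) * (X l p m : ℂ)) * (ch n (i * j) * (Y j m q : ℂ)) := by
    refine Finset.sum_congr rfl fun m _ => ?_
    rw [dft_apply, dft_apply, Finset.sum_mul_sum]
    exact Finset.sum_comm
  rw [lhs, rhs]
  calc ∑ k : ZMod n, ∑ j : ZMod n, ∑ m : Fin b,
          ch n (i * k) * ((X (k - j) p m : ℂ) * (Y j m q : ℂ))
      = ∑ j : ZMod n, ∑ k : ZMod n, ∑ m : Fin b,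
          ch n (i * k) * ((X (k - j) p m : ℂ) * (Y j m q : ℂ)) := Finset.sum_comm
    _ = ∑ j : ZMod n, ∑ l : ZMod n, ∑ m : Fin b,
          (ch n (i * l) * (X l p m : ℂ)) * (ch n (i * j) * (Y j m q : ℂ)) := by
        refine Finset.sum_congr rfl fun j _ => ?_
        refine Fintype.sum_equiv (Equiv.subRight j) _ _ fun l => ?_
        refine Finset.sum_congr rfl fun m _ => ?_
        simp only [Equiv.subRight_apply]
        have h := ch_add n (i * (l - j)) (i * j)
        rw [show i * (l - j) + i * j = i * l by ring] at h
        rw [h]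
        ring
    _ = ∑ j : ZMod n, ∑ m : Fin b, ∑ l : ZMod n,
          (ch n (i * l) * (X l p m : ℂ)) * (ch n (i * j) * (Y j m q : ℂ)) :=
        Finset.sum_congr rfl fun j _ => Finset.sum_comm
    _ = ∑ m : Fin b, ∑ j : ZMod n, ∑ l : ZMod n,
          (ch n (i * l) * (X l p m : ℂ)) * (ch n (i * j) * (Y j m q : ℂ)) := Finset.sum_comm

lemma dft_ttrans (X : Tensor a b n) (i : ZMod n) :
    dft (ttrans X) i = (dft X i).conjTranspose := by
  ext p q
  rw [dft_apply, Matrix.conjTranspose_apply, dft_apply, star_sum]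
  calc ∑ k : ZMod n, ch n (i * k) * ((ttrans X k p q : ℝ) : ℂ)
      = ∑ k : ZMod n, ch n (i * k) * ((X (-k) q p : ℝ) : ℂ) := by
        refine Finset.sum_congr rfl fun k _ => ?_
        simp [ttrans]
    _ = ∑ k : ZMod n, ch n (i * (-k)) * ((X (-(-k)) q p : ℝ) : ℂ) :=
        (Fintype.sum_equiv (Equiv.neg (ZMod n))
          (fun k => ch n (i * (-k)) * ((X (-(-k)) q p : ℝ) : ℂ)) _ (fun k => rfl)).symm
    _ = ∑ k : ZMod n, star (ch n (i * k) * ((X k q p : ℝ) : ℂ)) := by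
        refine Finset.sum_congr rfl fun k _ => ?_
        rw [neg_neg, mul_neg]
        rw [show star (ch n (i * k) * ((X k q p : ℝ) : ℂ))
            = (starRingEnd ℂ) (ch n (i * k)) * (starRingEnd ℂ) ((X k q p : ℝ) : ℂ) from by
          rw [← _root_.map_mul]; rfl]
        rw [ch_conj, Complex.conj_ofReal]

lemma dft_tid (i : ZMod n) : dft (tid a n) i = 1 := by
  ext p q
  rw [dft_apply]
  rw [Finset.sum_eq_single 0]
  · simp [tid, ch_zero, Matrix.one_apply]
    split_ifs <;> simp
  · intro k _ hk
    simp [tid, hk]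
  · simp

lemma dft_neg_eq_conj (X : Tensor a b n) (i : ZMod n) (p : Fin a) (q : Fin b) :
    dft X (-i) p q = (starRingEnd ℂ) (dft X i p q) := by
  rw [dft_apply, dft_apply, map_sum]
  refine Finset.sum_congr rfl fun k _ => ?_
  rw [_root_.map_mul, ch_conj, Complex.conj_ofReal, neg_mul]


lemma sum_inv_aux (i j : ZMod n) :
    ∑ k : ZMod n, ch n (i * k) * ch n (-(j * k)) = if i = j then (n : ℂ) else 0 := by
  have : ∀ k : ZMod n, ch n (i * k) * ch n (-(j * k)) = ch n ((i - j) * k) := fun k => by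
    rw [← ch_add]
    congr 1
    ring
  rw [Finset.sum_congr rfl fun k _ => this k, sum_ch]
  simp [sub_eq_zero]

/-- Complex inverse DFT, entrywise. -/
noncomputable def invEntry (M : ZMod n → Matrix (Fin a) (Fin b) ℂ) (k : ZMod n)
    (p : Fin a) (q : Fin b) : ℂ :=
  (n : ℂ)⁻¹ * ∑ i : ZMod n, ch n (-(i * k)) * M i p q

/-- Real tensor reconstructed from Fourier data. -/
noncomputable def realize (M : ZMod n → Matrix (Fin a) (Fin b) ℂ) : Tensor a b n :=
  fun k => Matrix.of fun p q => (invEntry M k p q).re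

lemma invEntry_dft (X : Tensor a b n) (k : ZMod n) (p : Fin a) (q : Fin b) :
    invEntry (dft X) k p q = (X k p q : ℂ) := by
  rw [invEntry]
  have : ∑ i : ZMod n, ch n (-(i * k)) * dft X i p q
      = ∑ l : ZMod n, (∑ i : ZMod n, ch n (i * l) * ch n (-(i * k))) * (X l p q : ℂ) := by
    calc ∑ i : ZMod n, ch n (-(i * k)) * dft X i p q
        = ∑ i : ZMod n, ∑ l : ZMod n, ch n (i * l) * ch n (-(i * k)) * (X l p q : ℂ) := by
          refine Finset.sum_congr rfl fun i _ => ?_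
          rw [dft_apply, Finset.mul_sum]
          exact Finset.sum_congr rfl fun l _ => by ring
      _ = ∑ l : ZMod n, ∑ i : ZMod n, ch n (i * l) * ch n (-(i * k)) * (X l p q : ℂ) :=
          Finset.sum_comm
      _ = _ := Finset.sum_congr rfl fun l _ => by rw [Finset.sum_mul]
  rw [this]
  have hn : (n : ℂ) ≠ 0 := Nat.cast_ne_zero.mpr (NeZero.ne n)
  have : ∀ l : ZMod n, (∑ i : ZMod n, ch n (i * l) * ch n (-(i * k)))
      = if l = k then (n : ℂ) else 0 := fun l => by
    have : ∀ i : ZMod n, ch n (i * l) * ch n (-(i * k)) = ch n (l * i) * ch n (-(k * i)) :=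
      fun i => by rw [mul_comm i l, mul_comm i k]
    rw [Finset.sum_congr rfl fun i _ => this i, sum_inv_aux]
  rw [Finset.sum_congr rfl fun l _ => by rw [this l]]
  simp only [ite_mul, zero_mul]
  rw [Finset.sum_ite_eq' Finset.univ k (fun l => (n : ℂ) * (X l p q : ℂ))]
  simp only [Finset.mem_univ, if_true]
  field_simp

lemma dft_injective : Function.Injective (dft (a := a) (b := b) (n := n)) := by
  intro X Y h
  funext k
  ext p q
  have hx := invEntry_dft X k p q
  have hy := invEntry_dft Y k p q
  rw [h] at hx
  rw [hx] at hy
  exact_mod_cast hy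

lemma dft_realize (M : ZMod n → Matrix (Fin a) (Fin b) ℂ)
    (hsym : ∀ i, M (-i) = (M i).map (starRingEnd ℂ)) :
    dft (realize M) = M := by
  have hreal : ∀ k p q, ((realize M k p q : ℝ) : ℂ) = invEntry M k p q := by
    intro k p q
    have hconj : (starRingEnd ℂ) (invEntry M k p q) = invEntry M k p q := by
      rw [invEntry, _root_.map_mul, map_sum]
      congr 1
      · simp
      calc ∑ i : ZMod n, (starRingEnd ℂ) (ch n (-(i * k)) * M i p q)
          = ∑ i : ZMod n, ch n (i * k) * M (-i) p q := by
            refine Finset.sum_congr rfl fun i _ => ?_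
            rw [_root_.map_mul, ch_conj, neg_neg, hsym i]
            simp [Matrix.map_apply]
        _ = ∑ i : ZMod n, ch n (-(i * k)) * M i p q := by
            refine Fintype.sum_equiv (Equiv.neg (ZMod n)) _ _ fun i => ?_
            simp only [Equiv.neg_apply]
            rw [show -(-i * k) = i * k by ring]
    simp only [realize, Matrix.of_apply]
    exact Complex.conj_eq_iff_re.mp hconj
  funext i
  ext p q
  rw [dft_apply]
  have hn : (n : ℂ) ≠ 0 := Nat.cast_ne_zero.mpr (NeZero.ne n)
  calc ∑ k : ZMod n, ch n (i * k) * ((realize M k p q : ℝ) : ℂ)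
      = ∑ k : ZMod n, ch n (i * k) * invEntry M k p q :=
        Finset.sum_congr rfl fun k _ => by rw [hreal k p q]
    _ = (n : ℂ)⁻¹ * ∑ k : ZMod n, ∑ j : ZMod n,
          ch n (i * k) * ch n (-(j * k)) * M j p q := by
        rw [Finset.mul_sum]
        refine Finset.sum_congr rfl fun k _ => ?_
        simp only [invEntry, Finset.mul_sum]
        exact Finset.sum_congr rfl fun j _ => by ring
    _ = (n : ℂ)⁻¹ * ∑ j : ZMod n,
          (∑ k : ZMod n, ch n (i * k) * ch n (-(j * k))) * M j p q := by
        congr 1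
        rw [Finset.sum_comm]
        exact Finset.sum_congr rfl fun j _ => by rw [Finset.sum_mul]
    _ = M i p q := by
        rw [Finset.sum_congr rfl fun j (_ : j ∈ Finset.univ) => by rw [sum_inv_aux]]
        simp only [ite_mul, zero_mul]
        rw [Finset.sum_ite_eq Finset.univ i (fun j => (n : ℂ) * M j p q)]
        simp only [Finset.mem_univ, if_true]
        field_simp


variable {m : ℕ}

/-- Entrywise complex conjugation of a matrix. -/
def cmap (A : Matrix (Fin a) (Fin b) ℂ) : Matrix (Fin a) (Fin b) ℂ :=
  A.map (starRingEnd ℂ)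

lemma cmap_mul (A B : Matrix (Fin m) (Fin m) ℂ) : cmap (A * B) = cmap A * cmap B := by
  ext p q
  simp [cmap, Matrix.mul_apply, Matrix.map_apply, map_sum]

lemma cmap_one : cmap (1 : Matrix (Fin m) (Fin m) ℂ) = 1 := by
  ext p q
  by_cases h : p = q <;> simp [cmap, Matrix.map_apply, Matrix.one_apply, h]

lemma cmap_cmap (A : Matrix (Fin a) (Fin b) ℂ) : cmap (cmap A) = A := by
  ext p q
  simp [cmap, Matrix.map_apply]

lemma cmap_star (A : Matrix (Fin m) (Fin m) ℂ) : star (cmap A) = cmap (star A) := by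
  ext p q
  simp [cmap, Matrix.star_eq_conjTranspose, Matrix.conjTranspose_apply, Matrix.map_apply]

/-- Real-to-complex entrywise map. -/
def remap (A : Matrix (Fin a) (Fin b) ℝ) : Matrix (Fin a) (Fin b) ℂ :=
  A.map (fun x => (x : ℂ))

lemma remap_mul (A B : Matrix (Fin m) (Fin m) ℝ) : remap (A * B) = remap A * remap B := by
  ext p q
  simp [remap, Matrix.mul_apply, Matrix.map_apply]

lemma remap_one : remap (1 : Matrix (Fin m) (Fin m) ℝ) = 1 := by
  ext p q
  by_cases h : p = q <;> simp [remap, Matrix.map_apply, Matrix.one_apply, h]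

lemma cmap_remap (A : Matrix (Fin a) (Fin b) ℝ) : cmap (remap A) = remap A := by
  ext p q
  simp [cmap, remap, Matrix.map_apply]

lemma star_remap (A : Matrix (Fin m) (Fin m) ℝ) : star (remap A) = remap (star A) := by
  ext p q
  simp [remap, Matrix.star_eq_conjTranspose, Matrix.conjTranspose_apply, Matrix.map_apply]

/-- Spectral decomposition of a Hermitian complex matrix, packaged. -/
lemma exists_decomp (B : Matrix (Fin m) (Fin m) ℂ) (hB : B.IsHermitian) :
    ∃ U D : Matrix (Fin m) (Fin m) ℂ,
      cmap D = D ∧ star U * U = 1 ∧ U * star U = 1 ∧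
      (∀ p q : Fin m, p ≠ q → D p q = 0) ∧ B = U * D * star U := by
  refine ⟨(hB.eigenvectorUnitary : Matrix (Fin m) (Fin m) ℂ),
    Matrix.diagonal (RCLike.ofReal ∘ hB.eigenvalues), ?_, ?_, ?_, ?_, hB.spectral_theorem⟩
  · ext p q
    by_cases h : p = q
    · subst h
      simp [cmap, Matrix.map_apply, Matrix.diagonal_apply_eq, Complex.conj_ofReal]
    · simp [cmap, Matrix.map_apply, Matrix.diagonal_apply_ne _ h]
  · exact Matrix.mem_unitaryGroup_iff'.mp hB.eigenvectorUnitary.2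
  · exact Matrix.mem_unitaryGroup_iff.mp hB.eigenvectorUnitary.2
  · intro p q h
    exact Matrix.diagonal_apply_ne (RCLike.ofReal ∘ hB.eigenvalues) h

/-- Spectral decomposition of a real-entried Hermitian complex matrix, with real data. -/
lemma exists_decomp_real (B : Matrix (Fin m) (Fin m) ℂ) (hB : B.IsHermitian)
    (hreal : cmap B = B) :
    ∃ U D : Matrix (Fin m) (Fin m) ℂ,
      cmap U = U ∧ cmap D = D ∧ star U * U = 1 ∧ U * star U = 1 ∧
      (∀ p q : Fin m, p ≠ q → D p q = 0) ∧ B = U * D * star U := by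
  set Br : Matrix (Fin m) (Fin m) ℝ := B.map Complex.re with hBr_def
  have hent : ∀ p q, ((Br p q : ℝ) : ℂ) = B p q := by
    intro p q
    have : (starRingEnd ℂ) (B p q) = B p q := by
      have := congrFun (congrFun hreal p) q
      simpa [cmap, Matrix.map_apply] using this
    simpa [hBr_def, Matrix.map_apply] using Complex.conj_eq_iff_re.mp this
  have hremap : remap Br = B := by
    ext p q
    simpa [remap, Matrix.map_apply] using hent p q
  have hBrH : Br.IsHermitian := by
    have hB' := hB
    rw [Matrix.IsHermitian] at hB' ⊢
    ext p q
    have := congrFun (congrFun hB' p) q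
    rw [Matrix.conjTranspose_apply] at this ⊢
    simp only [hBr_def, Matrix.map_apply, star_trivial]
    rw [← this]
    simp
  obtain ⟨hspec⟩ : Nonempty (Br = (hBrH.eigenvectorUnitary : Matrix (Fin m) (Fin m) ℝ) *
      Matrix.diagonal (RCLike.ofReal ∘ hBrH.eigenvalues) *
      star (hBrH.eigenvectorUnitary : Matrix (Fin m) (Fin m) ℝ)) := ⟨hBrH.spectral_theorem⟩
  set Ur := (hBrH.eigenvectorUnitary : Matrix (Fin m) (Fin m) ℝ)
  set Dr : Matrix (Fin m) (Fin m) ℝ := Matrix.diagonal (RCLike.ofReal ∘ hBrH.eigenvalues)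
  refine ⟨remap Ur, remap Dr, cmap_remap Ur, cmap_remap Dr, ?_, ?_, ?_, ?_⟩
  · rw [star_remap, ← remap_mul, Matrix.mem_unitaryGroup_iff'.mp hBrH.eigenvectorUnitary.2,
      remap_one]
  · rw [star_remap, ← remap_mul, Matrix.mem_unitaryGroup_iff.mp hBrH.eigenvectorUnitary.2,
      remap_one]
  · intro p q h
    have hz : Dr p q = 0 := Matrix.diagonal_apply_ne (RCLike.ofReal ∘ hBrH.eigenvalues) h
    simp [remap, Matrix.map_apply, hz]
  · rw [← hremap, hspec, remap_mul, remap_mul, star_remap]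

lemma exists_fourier_decomp (Xh : ZMod n → Matrix (Fin m) (Fin m) ℂ)
    (hH : ∀ i, (Xh i).IsHermitian) (hC : ∀ i, Xh (-i) = cmap (Xh i)) :
    ∃ U D : ZMod n → Matrix (Fin m) (Fin m) ℂ,
      (∀ i, U (-i) = cmap (U i)) ∧ (∀ i, D (-i) = cmap (D i)) ∧
      (∀ i, star (U i) * U i = 1) ∧ (∀ i, U i * star (U i) = 1) ∧
      (∀ i, ∀ p q : Fin m, p ≠ q → D i p q = 0) ∧
      (∀ i, Xh i = U i * D i * star (U i)) := by
  classical
  have hdec : ∀ i : ZMod n, ∃ P Q : Matrix (Fin m) (Fin m) ℂ,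
      (i = -i → cmap P = P) ∧ cmap Q = Q ∧ star P * P = 1 ∧ P * star P = 1 ∧
      (∀ p q : Fin m, p ≠ q → Q p q = 0) ∧ Xh i = P * Q * star P := by
    intro i
    by_cases hi : i = -i
    · have hreal : cmap (Xh i) = Xh i := by
        conv_rhs => rw [hi]
        exact (hC i).symm
      obtain ⟨P, Q, h1, h2, h3, h4, h5, h6⟩ := exists_decomp_real (Xh i) (hH i) hreal
      exact ⟨P, Q, fun _ => h1, h2, h3, h4, h5, h6⟩
    · obtain ⟨P, Q, h2, h3, h4, h5, h6⟩ := exists_decomp (Xh i) (hH i)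
      exact ⟨P, Q, fun h => absurd h hi, h2, h3, h4, h5, h6⟩
  choose P Q h1 h2 h3 h4 h5 h6 using hdec
  have hval : ∀ i : ZMod n, i.val ≤ (-i).val → (-i).val ≤ i.val → i = -i := by
    intro i ha hb
    have : i.val = (-i).val := le_antisymm ha hb
    have := ZMod.val_injective n this
    exact this
  refine ⟨fun i => if i.val ≤ (-i).val then P i else cmap (P (-i)),
    fun i => if i.val ≤ (-i).val then Q i else cmap (Q (-i)), ?_, ?_, ?_, ?_, ?_, ?_⟩
  · intro i
    dsimp only
    by_cases ha : i.val ≤ (-i).val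
    · by_cases hb : (-i).val ≤ (-(-i)).val
      · rw [if_pos ha, if_pos hb]
        have hi := hval i ha (by simpa using hb)
        rw [← hi, h1 i hi]
      · rw [if_pos ha, if_neg hb, neg_neg]
    · have hb : (-i).val ≤ (-(-i)).val := by
        rw [neg_neg]
        exact le_of_not_ge ha
      rw [if_neg ha, if_pos hb, cmap_cmap]
  · intro i
    dsimp only
    by_cases ha : i.val ≤ (-i).val
    · by_cases hb : (-i).val ≤ (-(-i)).val
      · rw [if_pos ha, if_pos hb]
        have hi := hval i ha (by simpa using hb)
        rw [← hi, h2 i]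
      · rw [if_pos ha, if_neg hb, neg_neg]
    · have hb : (-i).val ≤ (-(-i)).val := by
        rw [neg_neg]
        exact le_of_not_ge ha
      rw [if_neg ha, if_pos hb, cmap_cmap]
  · intro i
    dsimp only
    by_cases ha : i.val ≤ (-i).val
    · rw [if_pos ha]; exact h3 i
    · rw [if_neg ha, cmap_star, ← cmap_mul, h3 (-i), cmap_one]
  · intro i
    dsimp only
    by_cases ha : i.val ≤ (-i).val
    · rw [if_pos ha]; exact h4 i
    · rw [if_neg ha, cmap_star, ← cmap_mul, h4 (-i), cmap_one]
  · intro i p q hpq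
    dsimp only
    by_cases ha : i.val ≤ (-i).val
    · rw [if_pos ha]; exact h5 i p q hpq
    · rw [if_neg ha]
      simp [cmap, Matrix.map_apply, h5 (-i) p q hpq]
  · intro i
    dsimp only
    by_cases ha : i.val ≤ (-i).val
    · rw [if_pos ha, if_pos ha]; exact h6 i
    · rw [if_neg ha, if_neg ha, cmap_star, ← cmap_mul, ← cmap_mul, ← h6 (-i), ← hC (-i), neg_neg]


end TEig2


/-- T-eigendecomposition of a symmetric tensor. -/
theorem t_eig_exists (I I3 : ℕ) [NeZero I3] (X : Tensor I I I3) (hX : ttrans X = X) :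
    ∃ (V D : Tensor I I I3), Orthogonal V ∧ fDiag D ∧
      X = tprod (tprod V D) (ttrans V) := by
  classical
  have hH : ∀ i, (dft X i).IsHermitian := by
    intro i
    have h1 := TEig2.dft_ttrans X i
    rw [hX] at h1
    exact h1.symm
  have hC : ∀ i, dft X (-i) = TEig2.cmap (dft X i) := by
    intro i
    ext p q
    rw [TEig2.cmap, Matrix.map_apply]
    exact TEig2.dft_neg_eq_conj X i p q
  obtain ⟨U, Dd, hUs, hDs, h31, h32, hdg, hdec⟩ := TEig2.exists_fourier_decomp (dft X) hH hC
  have hdU : dft (TEig2.realize U) = U := TEig2.dft_realize U hUs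
  have hdD : dft (TEig2.realize Dd) = Dd := TEig2.dft_realize Dd hDs
  refine ⟨TEig2.realize U, TEig2.realize Dd, ⟨?_, ?_⟩, ?_, ?_⟩
  · apply TEig2.dft_injective
    funext i
    rw [TEig2.dft_tprod, TEig2.dft_ttrans, hdU, TEig2.dft_tid,
      ← Matrix.star_eq_conjTranspose, h31 i]
  · apply TEig2.dft_injective
    funext i
    rw [TEig2.dft_tprod, TEig2.dft_ttrans, hdU, TEig2.dft_tid,
      ← Matrix.star_eq_conjTranspose, h32 i]
  · intro k p q hpq
    have hz : ∀ i, Dd i p q = 0 := fun i => hdg i p q (fun h => hpq (congrArg Fin.val h))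
    simp [TEig2.realize, TEig2.invEntry, hz]
  · apply TEig2.dft_injective
    funext i
    rw [TEig2.dft_tprod, TEig2.dft_tprod, TEig2.dft_ttrans, hdU, hdD,
      ← Matrix.star_eq_conjTranspose]
    exact hdec i
end

section
/- Every tensor X ∈ ℝ^{I1×I2×I3} admits a T-SVD: X = U * S * V^T, where U ∈ ℝ^{I1×I1×I3} and V ∈ ℝ^{I2×I2×I3} are orthogonal under the T-product and S ∈ ℝ^{I1×I2×I3} is f-diagonal. -/
open scoped BigOperators

open TProd

namespace TSVD

open Matrix
open scoped ComplexOrder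

variable {𝕜 : Type*} [RCLike 𝕜]

/-- Rectangular singular value decomposition over an `RCLike` field. -/
theorem matrix_svd_exists {a b : ℕ} (M : Matrix (Fin a) (Fin b) 𝕜) :
    ∃ (U : Matrix (Fin a) (Fin a) 𝕜) (S : Matrix (Fin a) (Fin b) 𝕜)
      (V : Matrix (Fin b) (Fin b) 𝕜),
      Uᴴ * U = 1 ∧ U * Uᴴ = 1 ∧ Vᴴ * V = 1 ∧ V * Vᴴ = 1 ∧
      (∀ (i : Fin a) (j : Fin b), (i : ℕ) ≠ (j : ℕ) → S i j = 0) ∧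
      M = U * S * Vᴴ := by
  classical
  have hPSD : (Mᴴ * M).PosSemidef := posSemidef_conjTranspose_mul_self M
  have hH : (Mᴴ * M).IsHermitian := hPSD.1
  set d₀ : Fin b → ℝ := hH.eigenvalues with hd₀
  set V₀ : Matrix (Fin b) (Fin b) 𝕜 := (hH.eigenvectorUnitary : Matrix (Fin b) (Fin b) 𝕜) with hV₀def
  have hV₀l : V₀ᴴ * V₀ = 1 := by
    rw [← Matrix.star_eq_conjTranspose]
    exact Unitary.coe_star_mul_self hH.eigenvectorUnitary
  have hV₀r : V₀ * V₀ᴴ = 1 := by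
    rw [← Matrix.star_eq_conjTranspose]
    exact Unitary.coe_mul_star_self hH.eigenvectorUnitary
  have hspec : Mᴴ * M = V₀ * diagonal (RCLike.ofReal ∘ d₀) * V₀ᴴ := by
    rw [← Matrix.star_eq_conjTranspose]
    exact hH.spectral_theorem
  have hdiag : V₀ᴴ * (Mᴴ * M) * V₀ = diagonal (RCLike.ofReal ∘ d₀) := by
    rw [hspec]
    rw [show V₀ᴴ * (V₀ * diagonal (RCLike.ofReal ∘ d₀) * V₀ᴴ) * V₀
        = (V₀ᴴ * V₀) * diagonal (RCLike.ofReal ∘ d₀) * (V₀ᴴ * V₀) by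
      simp only [Matrix.mul_assoc]]
    rw [hV₀l, one_mul, mul_one]
  -- sort eigenvalues in decreasing order
  set π : Equiv.Perm (Fin b) := Tuple.sort (fun j => -(d₀ j)) with hπdef
  have hmono : Monotone ((fun j => -(d₀ j)) ∘ π) := Tuple.monotone_sort _
  set d : Fin b → ℝ := fun j => d₀ (π j) with hd
  have hanti : ∀ i j : Fin b, i ≤ j → d j ≤ d i := by
    intro i j hij
    have := hmono hij
    simp only [Function.comp_apply] at this
    simpa [hd] using neg_le_neg_iff.mp this
  have hdnn : ∀ j, 0 ≤ d j := fun j => hPSD.eigenvalues_nonneg (π j)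
  set V : Matrix (Fin b) (Fin b) 𝕜 := V₀.submatrix id ⇑π with hVdef
  have hVl : Vᴴ * V = 1 := by
    ext i j
    have : (Vᴴ * V) i j = (V₀ᴴ * V₀) (π i) (π j) := by
      simp [hVdef, Matrix.mul_apply, Matrix.conjTranspose_apply]
    rw [this, hV₀l]
    simp [Matrix.one_apply, EmbeddingLike.apply_eq_iff_eq]
  have hVr : V * Vᴴ = 1 := mul_eq_one_comm.mp hVl
  set W : Matrix (Fin a) (Fin b) 𝕜 := (M * V₀).submatrix id ⇑π with hWdef
  have hWMV : W = M * V := by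
    ext r j
    simp [hWdef, hVdef, Matrix.mul_apply]
  have hWW : ∀ j j' : Fin b,
      (∑ r, (starRingEnd 𝕜) (W r j) * W r j') = if j = j' then ((d j : 𝕜)) else 0 := by
    intro j j'
    have h1 : (∑ r, (starRingEnd 𝕜) (W r j) * W r j') = (Wᴴ * W) j j' := by
      simp [Matrix.mul_apply, Matrix.conjTranspose_apply]
    have h2 : (Wᴴ * W) j j' = (V₀ᴴ * (Mᴴ * M) * V₀) (π j) (π j') := by
      rw [hWMV]
      have : Vᴴ * (Mᴴ * M) * V = ((M * V)ᴴ) * (M * V) := by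
        rw [Matrix.conjTranspose_mul]; simp only [Matrix.mul_assoc]
      rw [← this]
      simp [hVdef, Matrix.mul_apply, Matrix.conjTranspose_apply, Finset.sum_mul,
        Finset.mul_sum]
    rw [h1, h2, hdiag]
    simp [Matrix.diagonal_apply, EmbeddingLike.apply_eq_iff_eq, hd]
  -- zero columns
  have hcol0 : ∀ j : Fin b, d j = 0 → ∀ r, W r j = 0 := by
    intro j hj r
    have h0 : (∑ r, (starRingEnd 𝕜) (W r j) * W r j) = 0 := by
      rw [hWW j j]; simp [hj]
    have h1 : (∑ r, ‖W r j‖ ^ 2) = (0:ℝ) := by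
      have h3 := congrArg RCLike.re h0
      rw [map_sum, map_zero] at h3
      rw [← h3]
      apply Finset.sum_congr rfl
      intro r _
      rw [RCLike.conj_mul, ← RCLike.ofReal_pow, RCLike.ofReal_re]
    have h2 : ‖W r j‖ ^ 2 = (0:ℝ) := by
      have hnn : ∀ i ∈ Finset.univ, (0:ℝ) ≤ ‖W i j‖ ^ 2 := fun i _ => sq_nonneg _
      exact (Finset.sum_eq_zero_iff_of_nonneg hnn).mp h1 r (Finset.mem_univ r)
    have := pow_eq_zero_iff (n := 2) (by norm_num) |>.mp h2
    simpa using this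
  have hkey : ∀ x : ℝ, 0 < x →
      ((Real.sqrt x : 𝕜))⁻¹ * (((Real.sqrt x : 𝕜))⁻¹ * ((x : 𝕜))) = 1 := by
    intro x hx
    have h2 : Real.sqrt x ≠ 0 := ne_of_gt (Real.sqrt_pos.mpr hx)
    have h2' : ((Real.sqrt x : 𝕜)) ≠ 0 := RCLike.ofReal_ne_zero.mpr h2
    have h1 : Real.sqrt x * Real.sqrt x = x := Real.mul_self_sqrt hx.le
    rw [← h1]
    push_cast
    field_simp
    rw [Real.sqrt_sq (Real.sqrt_nonneg x)]
  set σ : Fin b → ℝ := fun j => Real.sqrt (d j) with hσ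
  -- columns as Euclidean vectors
  set Wcol : Fin b → EuclideanSpace 𝕜 (Fin a) := fun j => WithLp.toLp 2 (fun r => W r j) with hWcol
  have hinner : ∀ j j', inner 𝕜 (Wcol j) (Wcol j') = if j = j' then ((d j : 𝕜)) else 0 := by
    intro j j'
    rw [PiLp.inner_apply]
    simpa [hWcol, mul_comm] using hWW j j'
  -- rank bound : nonzero d's occur only at indices < a
  have hlt : ∀ j : Fin b, d j ≠ 0 → (j : ℕ) < a := by
    intro j hj
    by_contra hja
    push_neg at hja
    -- build an orthonormal family of size j+1
    have hdpos : 0 < d j := lt_of_le_of_ne (hdnn j) (Ne.symm hj)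
    set cl : Fin ((j : ℕ) + 1) → Fin b := fun i => ⟨(i : ℕ), lt_of_lt_of_le i.2 j.2⟩ with hcl
    have hcle : ∀ i, cl i ≤ j := fun i => by
      simp only [hcl]; exact Fin.mk_le_of_le_val (Nat.lt_succ_iff.mp i.2)
    have hdpos' : ∀ i, 0 < d (cl i) := fun i => lt_of_lt_of_le hdpos (hanti _ _ (hcle i))
    set e : Fin ((j : ℕ) + 1) → EuclideanSpace 𝕜 (Fin a) :=
      fun i => ((σ (cl i) : 𝕜))⁻¹ • Wcol (cl i) with he
    have hON : Orthonormal 𝕜 e := by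
      rw [orthonormal_iff_ite]
      intro i i'
      simp only [he, inner_smul_left, inner_smul_right, hinner]
      rw [map_inv₀, RCLike.conj_ofReal]
      have hclinj : cl i = cl i' ↔ i = i' := by
        constructor
        · intro h
          apply Fin.ext
          have := congrArg Fin.val h
          simpa [hcl] using this
        · intro h; rw [h]
      by_cases h : i = i'
      · subst h
        simp only [if_pos rfl, hclinj, if_pos rfl, if_true]
        simpa only [hσ] using hkey (d (cl i)) (hdpos' i)
      · rw [if_neg h, if_neg (fun hc => h (hclinj.mp hc))]
        simp
    have hcard := hON.linearIndependent.fintype_card_le_finrank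
    rw [finrank_euclideanSpace_fin] at hcard
    simp only [Fintype.card_fin] at hcard
    omega
  -- the orthonormal partial family indexed by Fin a
  set v : Fin a → EuclideanSpace 𝕜 (Fin a) := fun i =>
    if h : (i : ℕ) < b then
      (if d ⟨(i : ℕ), h⟩ ≠ 0 then ((σ ⟨(i : ℕ), h⟩ : 𝕜))⁻¹ • Wcol ⟨(i : ℕ), h⟩ else 0)
    else 0 with hv
  set s : Set (Fin a) := {i | ∃ h : (i : ℕ) < b, d ⟨(i : ℕ), h⟩ ≠ 0} with hs
  have hvs : ∀ i (hi : i ∈ s), v i = ((σ ⟨(i : ℕ), hi.choose⟩ : 𝕜))⁻¹ • Wcol ⟨(i : ℕ), hi.choose⟩ := by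
    intro i hi
    obtain ⟨h, hd0⟩ := hi
    simp only [hv]
    rw [dif_pos h, if_pos hd0]
  have hON2 : Orthonormal 𝕜 (s.restrict v) := by
    rw [orthonormal_iff_ite]
    rintro ⟨i, hi⟩ ⟨i', hi'⟩
    have hi2 := hi
    have hi2' := hi'
    obtain ⟨h, hd0⟩ := hi2
    obtain ⟨h', hd0'⟩ := hi2'
    simp only [Set.restrict_apply, Set.restrict, hv]
    rw [dif_pos h, if_pos hd0, dif_pos h', if_pos hd0']
    rw [inner_smul_left, inner_smul_right, hinner, map_inv₀, RCLike.conj_ofReal]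
    by_cases hee : i = i'
    · subst hee
      have hdp : 0 < d ⟨(i : ℕ), h⟩ := lt_of_le_of_ne (hdnn _) (Ne.symm hd0)
      rw [if_pos rfl, if_pos rfl]
      simpa only [hσ] using hkey (d ⟨(i : ℕ), h⟩) hdp
    · have hne : (⟨(i : ℕ), h⟩ : Fin b) ≠ ⟨(i' : ℕ), h'⟩ := by
        intro hc
        exact hee (Fin.ext (by simpa using congrArg Fin.val hc))
      rw [if_neg hne, if_neg (fun hc => hee (by simpa using congrArg Subtype.val hc))]
      simp
  obtain ⟨bU, hbU⟩ :=
    hON2.exists_orthonormalBasis_extension_of_card_eq (by simp) 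
  set U : Matrix (Fin a) (Fin a) 𝕜 := Matrix.of (fun r i => bU i r) with hU
  have hUl : Uᴴ * U = 1 := by
    ext i j
    have : (Uᴴ * U) i j = inner 𝕜 (bU i) (bU j) := by
      rw [PiLp.inner_apply]
      simp [hU, Matrix.mul_apply, Matrix.conjTranspose_apply, mul_comm]
    rw [this, orthonormal_iff_ite.mp bU.orthonormal i j]
    simp [Matrix.one_apply]
  have hUr : U * Uᴴ = 1 := mul_eq_one_comm.mp hUl
  set S : Matrix (Fin a) (Fin b) 𝕜 :=
    Matrix.of (fun i j => if (i : ℕ) = (j : ℕ) then ((σ j : 𝕜)) else 0) with hS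
  refine ⟨U, S, V, hUl, hUr, hVl, hVr, ?_, ?_⟩
  · intro i j hij
    simp [hS, hij]
  · have hUS : U * S = W := by
      ext r j
      rw [Matrix.mul_apply]
      by_cases hdj : d j = 0
      · have hW0 : W r j = 0 := hcol0 j hdj r
        have hσ0 : σ j = 0 := by simp [hσ, hdj]
        rw [hW0]
        apply Finset.sum_eq_zero
        intro i _
        simp [hS, hσ0]
      · have hja : (j : ℕ) < a := hlt j hdj
        set i₀ : Fin a := ⟨(j : ℕ), hja⟩ with hi₀
        have hstep : ∀ i : Fin a, U r i * S i j = if i = i₀ then U r i * ((σ j : 𝕜)) else 0 := by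
          intro i
          by_cases hii : i = i₀
          · subst hii
            simp [hS, hi₀]
          · have : (i : ℕ) ≠ (j : ℕ) := by
              intro hc
              apply hii
              apply Fin.ext
              simp [hi₀, hc]
            simp [hS, this, hii]
        rw [Finset.sum_congr rfl (fun i _ => hstep i), Finset.sum_ite_eq' Finset.univ i₀]
        rw [if_pos (Finset.mem_univ i₀)]
        have hi₀s : i₀ ∈ s := by
          refine ⟨by simpa [hi₀] using j.2, ?_⟩
          have : (⟨((i₀ : ℕ)), by simpa [hi₀] using j.2⟩ : Fin b) = j := by
            apply Fin.ext; simp [hi₀]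
          rw [this]; exact hdj
        have hbUi : bU i₀ = v i₀ := hbU i₀ hi₀s
        have hveq : v i₀ = ((σ j : 𝕜))⁻¹ • Wcol j := by
          obtain ⟨h, hd0⟩ := hi₀s
          have hfin : (⟨((i₀ : ℕ)), h⟩ : Fin b) = j := Fin.ext (by simp [hi₀])
          simp only [hv]
          rw [dif_pos h, if_pos hd0, hfin]
        have hUri : U r i₀ = ((σ j : 𝕜))⁻¹ * W r j := by
          simp only [hU, Matrix.of_apply]
          rw [hbUi, hveq]
          simp [hWcol]
        rw [hUri]
        have hσne : (σ j : ℝ) ≠ 0 := by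
          simp only [hσ]
          exact Real.sqrt_ne_zero'.mpr (lt_of_le_of_ne (hdnn j) (Ne.symm hdj))
        have hσne' : ((σ j : 𝕜)) ≠ 0 := RCLike.ofReal_ne_zero.mpr hσne
        field_simp
    rw [hUS, hWMV]
    rw [Matrix.mul_assoc, hVr, Matrix.mul_one]

end TSVD

namespace TSVD

open Matrix

variable {a b c n : ℕ} [NeZero n]

lemma conj_stdAddChar (x : ZMod n) :
    (starRingEnd ℂ) (ZMod.stdAddChar x) = ZMod.stdAddChar (-x) := by
  rw [ZMod.stdAddChar_apply, ZMod.stdAddChar_apply, AddChar.map_neg_eq_inv,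
    Circle.coe_inv_eq_conj]

/-- Complex Fourier transform of a real tensor. -/
noncomputable def Ft (X : Tensor a b n) : ZMod n → Matrix (Fin a) (Fin b) ℂ :=
  ZMod.dft (fun k => (X k).map Complex.ofReal)

/-- Convolution theorem for matrix-valued functions. -/
lemma dft_conv (A : ZMod n → Matrix (Fin a) (Fin b) ℂ) (B : ZMod n → Matrix (Fin b) (Fin c) ℂ)
    (i : ZMod n) :
    ZMod.dft (fun k => ∑ j : ZMod n, A (k - j) * B j) i = ZMod.dft A i * ZMod.dft B i := by
  rw [ZMod.dft_apply, ZMod.dft_apply, ZMod.dft_apply]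
  have hR : (∑ k : ZMod n, ZMod.stdAddChar (-(k * i)) • A k) *
      (∑ j : ZMod n, ZMod.stdAddChar (-(j * i)) • B j)
      = ∑ j : ZMod n, ∑ k : ZMod n,
          (ZMod.stdAddChar (-(k * i)) • A k) * (ZMod.stdAddChar (-(j * i)) • B j) := by
    rw [Matrix.sum_mul]
    simp only [Matrix.mul_sum]
    exact Finset.sum_comm
  rw [hR]
  have hL : (∑ k : ZMod n, ZMod.stdAddChar (-(k * i)) • ∑ j : ZMod n, A (k - j) * B j)
      = ∑ j : ZMod n, ∑ k : ZMod n, ZMod.stdAddChar (-(k * i)) • (A (k - j) * B j) := by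
    simp only [Finset.smul_sum]
    exact Finset.sum_comm
  rw [hL]
  refine Finset.sum_congr rfl fun j _ => ?_
  refine Fintype.sum_equiv (Equiv.subRight j) _ _ fun k => ?_
  rw [Matrix.smul_mul, Matrix.mul_smul, smul_smul]
  rw [Equiv.subRight_apply]
  congr 1
  rw [← AddChar.map_add_eq_mul]
  congr 1
  ring

lemma Ft_tprod (X : Tensor a b n) (Y : Tensor b c n) (i : ZMod n) :
    Ft (TProd.tprod X Y) i = Ft X i * Ft Y i := by
  have h1 : (fun k => ((TProd.tprod X Y) k).map Complex.ofReal)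
      = fun k => ∑ j : ZMod n, ((X (k - j)).map Complex.ofReal) * ((Y j).map Complex.ofReal) := by
    funext k
    ext r s
    simp only [TProd.tprod, Matrix.map_apply, Matrix.sum_apply, Matrix.mul_apply]
    push_cast
    rfl
  rw [Ft, h1]
  exact dft_conv (fun m => (X m).map Complex.ofReal) (fun m => (Y m).map Complex.ofReal) i

lemma Ft_ttrans (X : Tensor a b n) (i : ZMod n) :
    Ft (ttrans X) i = (Ft X i)ᴴ := by
  rw [Ft, Ft, ZMod.dft_apply, ZMod.dft_apply, Matrix.conjTranspose_sum]
  refine Fintype.sum_equiv (Equiv.neg (ZMod n)) _ _ fun k => ?_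
  rw [Matrix.conjTranspose_smul]
  rw [Equiv.neg_apply]
  congr 1
  · rw [Complex.star_def, conj_stdAddChar]
    congr 1
    ring
  · ext r s
    simp [ttrans, Matrix.map_apply, Matrix.conjTranspose_apply, Complex.conj_ofReal]

lemma Ft_tid (i : ZMod n) : Ft (tid a n) i = 1 := by
  rw [Ft, ZMod.dft_apply]
  rw [Finset.sum_eq_single (0 : ZMod n)]
  · simp [tid, Matrix.map_one]
  · intro k _ hk
    simp [tid, hk]
  · simp

lemma Ft_inj {X Y : Tensor a b n} (h : Ft X = Ft Y) : X = Y := by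
  have h2 : (fun k => (X k).map Complex.ofReal) = (fun k => (Y k).map Complex.ofReal) :=
    ZMod.dft.injective h
  funext k
  ext i j
  have h3 := congrFun h2 k
  have h4 : (X k).map Complex.ofReal i j = (Y k).map Complex.ofReal i j := by rw [h3]
  simpa [Matrix.map_apply] using h4

lemma Ft_conj_symm (X : Tensor a b n) (i : ZMod n) :
    Ft X (-i) = (Ft X i).map (starRingEnd ℂ) := by
  rw [Ft, ZMod.dft_apply, ZMod.dft_apply]
  have hmap : ((∑ k : ZMod n, ZMod.stdAddChar (-(k * i)) • (X k).map Complex.ofReal).map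
      (starRingEnd ℂ)) = ∑ k : ZMod n,
        (starRingEnd ℂ) (ZMod.stdAddChar (-(k * i))) • ((X k).map Complex.ofReal) := by
    ext r s
    simp only [Matrix.map_apply, Matrix.sum_apply, Matrix.smul_apply, smul_eq_mul, map_sum,
      _root_.map_mul, Complex.conj_ofReal]
  rw [hmap]
  refine Finset.sum_congr rfl fun k _ => ?_
  rw [conj_stdAddChar]
  congr 2
  ring

/-- Reconstruct a real tensor from conjugate-symmetric Fourier data. -/
noncomputable def realify (G : ZMod n → Matrix (Fin a) (Fin b) ℂ) : Tensor a b n :=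
  fun k => ((ZMod.dft.symm G) k).map Complex.re

lemma realify_entry_real {G : ZMod n → Matrix (Fin a) (Fin b) ℂ}
    (hsymm : ∀ i, G (-i) = (G i).map (starRingEnd ℂ)) (k : ZMod n) (r : Fin a) (s : Fin b) :
    (starRingEnd ℂ) ((ZMod.dft.symm G) k r s) = (ZMod.dft.symm G) k r s := by
  rw [ZMod.invDFT_apply]
  simp only [Matrix.smul_apply, Matrix.sum_apply, smul_eq_mul, _root_.map_mul, map_sum, map_inv₀,
    map_natCast]
  congr 1
  refine Fintype.sum_equiv (Equiv.neg (ZMod n)) _ _ fun m => ?_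
  rw [Equiv.neg_apply]
  rw [conj_stdAddChar]
  have : (starRingEnd ℂ) (G m r s) = G (-m) r s := by
    rw [hsymm m]; simp [Matrix.map_apply]
  rw [this]
  congr 2
  ring

lemma Ft_realify {G : ZMod n → Matrix (Fin a) (Fin b) ℂ}
    (hsymm : ∀ i, G (-i) = (G i).map (starRingEnd ℂ)) : Ft (realify G) = G := by
  have hreal : (fun k => ((realify G) k).map Complex.ofReal) = ZMod.dft.symm G := by
    funext k
    ext r s
    simp only [realify, Matrix.map_apply]
    exact Complex.conj_eq_iff_re.mp (realify_entry_real hsymm k r s)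
  rw [Ft, hreal, LinearEquiv.apply_symm_apply]

end TSVD

namespace TSVD2

open Matrix TSVD

/- matrix map helper lemmas -/
lemma rmap_mul {p q r : ℕ} (A : Matrix (Fin p) (Fin q) ℝ) (B : Matrix (Fin q) (Fin r) ℝ) :
    (A * B).map Complex.ofReal = A.map Complex.ofReal * B.map Complex.ofReal := by
  ext i j
  simp only [Matrix.map_apply, Matrix.mul_apply]
  push_cast
  rfl

lemma rmap_ct {p q : ℕ} (A : Matrix (Fin p) (Fin q) ℝ) :
    (Aᴴ).map Complex.ofReal = (A.map Complex.ofReal)ᴴ := by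
  ext i j
  simp [Matrix.map_apply, Matrix.conjTranspose_apply, Complex.conj_ofReal]

lemma rmap_one {p : ℕ} : (1 : Matrix (Fin p) (Fin p) ℝ).map Complex.ofReal = 1 := by
  ext i j
  simp only [Matrix.map_apply, Matrix.one_apply, apply_ite Complex.ofReal,
    Complex.ofReal_one, Complex.ofReal_zero]

lemma cmap_mul {p q r : ℕ} (A : Matrix (Fin p) (Fin q) ℂ) (B : Matrix (Fin q) (Fin r) ℂ) :
    (A * B).map (starRingEnd ℂ) = A.map (starRingEnd ℂ) * B.map (starRingEnd ℂ) := by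
  ext i j
  simp only [Matrix.map_apply, Matrix.mul_apply, map_sum, _root_.map_mul]

lemma cmap_ct {p q : ℕ} (A : Matrix (Fin p) (Fin q) ℂ) :
    (Aᴴ).map (starRingEnd ℂ) = (A.map (starRingEnd ℂ))ᴴ := by
  ext i j
  simp [Matrix.map_apply, Matrix.conjTranspose_apply]

lemma cmap_one {p : ℕ} : (1 : Matrix (Fin p) (Fin p) ℂ).map (starRingEnd ℂ) = 1 := by
  ext i j
  simp only [Matrix.map_apply, Matrix.one_apply, apply_ite (starRingEnd ℂ), _root_.map_one,
    _root_.map_zero]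

lemma cmap_cmap {p q : ℕ} (A : Matrix (Fin p) (Fin q) ℂ) :
    (A.map (starRingEnd ℂ)).map (starRingEnd ℂ) = A := by
  ext i j
  simp [Matrix.map_apply]

lemma real_of_selfconj {p q : ℕ} {A : Matrix (Fin p) (Fin q) ℂ}
    (h : A.map (starRingEnd ℂ) = A) : (A.map Complex.re).map Complex.ofReal = A := by
  ext i j
  have := congrFun (congrFun (congrArg (fun M => (M : Matrix (Fin p) (Fin q) ℂ)) h) i) j
  simp only [Matrix.map_apply] at this ⊢
  exact Complex.conj_eq_iff_re.mp this

/-- combine real-slice data (at self-paired frequencies) with complex-slice data into a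
conjugate-symmetric family. -/
noncomputable def mix {p q n : ℕ} [NeZero n] (fR : ZMod n → Matrix (Fin p) (Fin q) ℝ)
    (fC : ZMod n → Matrix (Fin p) (Fin q) ℂ) : ZMod n → Matrix (Fin p) (Fin q) ℂ :=
  fun k => if k = -k then (fR k).map Complex.ofReal
    else if k.val < (-k).val then fC k
    else (fC (-k)).map (starRingEnd ℂ)

lemma val_ne_of_ne_neg {n : ℕ} [NeZero n] {k : ZMod n} (h : k ≠ -k) : k.val ≠ (-k).val :=
  fun hv => h (ZMod.val_injective n hv)

lemma mix_symm {p q n : ℕ} [NeZero n] (fR : ZMod n → Matrix (Fin p) (Fin q) ℝ)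
    (fC : ZMod n → Matrix (Fin p) (Fin q) ℂ) (k : ZMod n) :
    mix fR fC (-k) = (mix fR fC k).map (starRingEnd ℂ) := by
  by_cases h0 : k = -k
  · rw [← h0]
    simp only [mix, if_pos h0]
    ext i j
    simp [Matrix.map_apply, Complex.conj_ofReal]
  · have e1 : ¬(-k = k) := fun hc => h0 hc.symm
    by_cases h1 : k.val < (-k).val
    · have e2 : ¬((-k).val < k.val) := Nat.lt_asymm h1
      simp only [mix, neg_neg, if_neg e1, if_neg e2, if_neg h0, if_pos h1]
    · have h2 : (-k).val < k.val :=
        lt_of_le_of_ne (not_lt.mp h1) (fun hc => (val_ne_of_ne_neg h0) hc.symm)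
      simp only [mix, neg_neg, if_neg e1, if_pos h2, if_neg h0, if_neg h1]
      exact (cmap_cmap _).symm

end TSVD2

open Matrix TSVD TSVD2
open scoped ComplexOrder

/-- existence of the T-SVD. -/
theorem t_svd_exists (I1 I2 I3 : ℕ) [NeZero I3] (X : Tensor I1 I2 I3) :
    ∃ (U : Tensor I1 I1 I3) (S : Tensor I1 I2 I3) (V : Tensor I2 I2 I3),
      Orthogonal U ∧ Orthogonal V ∧ fDiag S ∧
      X = tprod (tprod U S) (ttrans V) := by
  classical
  -- complex SVD of each Fourier slice
  choose cU cS cV hcU1 hcU2 hcV1 hcV2 hcS hcM using fun k : ZMod I3 => matrix_svd_exists (Ft X k)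
  -- real SVD of the real part of each Fourier slice
  choose rU rS rV hrU1 hrU2 hrV1 hrV2 hrS hrM using
    fun k : ZMod I3 => matrix_svd_exists ((Ft X k).map Complex.re)
  set GU := mix rU cU with hGU
  set GS := mix rS cS with hGS
  set GV := mix rV cV with hGV
  -- the real Fourier slices are self-conjugate at self-paired frequencies
  have hXreal : ∀ k : ZMod I3, k = -k → (Ft X k).map (starRingEnd ℂ) = Ft X k := by
    intro k h0
    conv_rhs => rw [h0]
    exact (Ft_conj_symm X k).symm
  -- slicewise decomposition
  have hFt_eq : ∀ k, Ft X k = GU k * GS k * (GV k)ᴴ := by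
    intro k
    by_cases h0 : k = -k
    · simp only [hGU, hGS, hGV, mix, if_pos h0]
      rw [← rmap_ct, ← rmap_mul, ← rmap_mul, ← hrM k]
      exact (real_of_selfconj (hXreal k h0)).symm
    · by_cases h1 : k.val < (-k).val
      · simp only [hGU, hGS, hGV, mix, if_neg h0, if_pos h1]
        exact hcM k
      · simp only [hGU, hGS, hGV, mix, if_neg h0, if_neg h1]
        rw [← cmap_ct, ← cmap_mul, ← cmap_mul, ← hcM (-k)]
        have := Ft_conj_symm X (-k)
        rw [neg_neg] at this
        exact this.symm ▸ this
  -- unitarity of the Fourier data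
  have hunitU : ∀ k, (GU k)ᴴ * GU k = 1 ∧ GU k * (GU k)ᴴ = 1 := by
    intro k
    by_cases h0 : k = -k
    · simp only [hGU, mix, if_pos h0]
      constructor
      · rw [← rmap_ct, ← rmap_mul, hrU1 k, rmap_one]
      · rw [← rmap_ct, ← rmap_mul, hrU2 k, rmap_one]
    · by_cases h1 : k.val < (-k).val
      · simp only [hGU, mix, if_neg h0, if_pos h1]
        exact ⟨hcU1 k, hcU2 k⟩
      · simp only [hGU, mix, if_neg h0, if_neg h1]
        constructor
        · rw [← cmap_ct, ← cmap_mul, hcU1 (-k), cmap_one]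
        · rw [← cmap_ct, ← cmap_mul, hcU2 (-k), cmap_one]
  have hunitV : ∀ k, (GV k)ᴴ * GV k = 1 ∧ GV k * (GV k)ᴴ = 1 := by
    intro k
    by_cases h0 : k = -k
    · simp only [hGV, mix, if_pos h0]
      constructor
      · rw [← rmap_ct, ← rmap_mul, hrV1 k, rmap_one]
      · rw [← rmap_ct, ← rmap_mul, hrV2 k, rmap_one]
    · by_cases h1 : k.val < (-k).val
      · simp only [hGV, mix, if_neg h0, if_pos h1]
        exact ⟨hcV1 k, hcV2 k⟩
      · simp only [hGV, mix, if_neg h0, if_neg h1]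
        constructor
        · rw [← cmap_ct, ← cmap_mul, hcV1 (-k), cmap_one]
        · rw [← cmap_ct, ← cmap_mul, hcV2 (-k), cmap_one]
  -- diagonality of the Fourier data
  have hGS0 : ∀ k (i : Fin I1) (j : Fin I2), (i : ℕ) ≠ (j : ℕ) → GS k i j = 0 := by
    intro k i j hij
    by_cases h0 : k = -k
    · simp only [hGS, mix, if_pos h0, Matrix.map_apply, hrS k i j hij, Complex.ofReal_zero]
    · by_cases h1 : k.val < (-k).val
      · simp only [hGS, mix, if_neg h0, if_pos h1]
        exact hcS k i j hij
      · simp only [hGS, mix, if_neg h0, if_neg h1, Matrix.map_apply, hcS (-k) i j hij, map_zero]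
  -- construct the real tensors
  refine ⟨realify GU, realify GS, realify GV, ?_, ?_, ?_, ?_⟩
  · constructor
    · apply Ft_inj
      funext k
      rw [Ft_tprod, Ft_ttrans, Ft_realify (mix_symm rU cU), Ft_tid]
      exact (hunitU k).1
    · apply Ft_inj
      funext k
      rw [Ft_tprod, Ft_ttrans, Ft_realify (mix_symm rU cU), Ft_tid]
      exact (hunitU k).2
  · constructor
    · apply Ft_inj
      funext k
      rw [Ft_tprod, Ft_ttrans, Ft_realify (mix_symm rV cV), Ft_tid]
      exact (hunitV k).1
    · apply Ft_inj
      funext k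
      rw [Ft_tprod, Ft_ttrans, Ft_realify (mix_symm rV cV), Ft_tid]
      exact (hunitV k).2
  · intro k i j hij
    simp only [realify, Matrix.map_apply, ZMod.invDFT_apply, Matrix.smul_apply, Matrix.sum_apply,
      smul_eq_mul]
    have : ∀ m : ZMod I3, ZMod.stdAddChar (m * k) * GS m i j = 0 := by
      intro m
      rw [hGS0 m i j hij, mul_zero]
    rw [Finset.sum_congr rfl (fun m _ => this m), Finset.sum_const_zero, mul_zero]
    simp
  · apply Ft_inj
    funext k
    rw [Ft_tprod, Ft_tprod, Ft_ttrans, Ft_realify (mix_symm rU cU), Ft_realify (mix_symm rS cS),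
      Ft_realify (mix_symm rV cV)]
    exact hFt_eq k
end

section
/- Let X ∈ ℝ^{I1×I2×I3}, Ω ∈ ℝ^{I2×k×I3}, Y = X*Ω with each Fourier-domain frontal slice of Y of full column rank, W = X^T*Y, and let Y = Û*Ŝ*V̂^T be the economic T-SVD of Y with Ŝ invertible. Setting Q = Y*V̂*Ŝ^{−1} and B = (W*V̂*Ŝ^{−1})^T, one has Q*B = Y*(Y^T*Y)^{−1}*W^T and ‖B‖_F² = trace of the first frontal slice of W^T*W*(Y^T*Y)^{−1}. -/
open scoped BigOperators

open TProd

/-!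
Since `Uᵀ*U = I`, the Gram tensor of `Y = U*S*Vᵀ` is `Yᵀ*Y = V*(Sᵀ*S)*Vᵀ`, which has the right
inverse `V*(S⁻¹*S⁻ᵀ)*Vᵀ`; as `Zinv` is a left inverse of `Yᵀ*Y`, the two coincide. Substituting
this into `Q*B = Y*V*S⁻¹*S⁻ᵀ*Vᵀ*Wᵀ` gives the first identity. For the second,
`‖B‖² = trace (Bᵀ*B)(:,:,1)` and the trace of the first frontal slice of a T-product is
invariant under cyclic permutation of the factors.
-/

namespace TProd

variable {a b c d n : ℕ} [NeZero n]

lemma tprod_assoc (X : Tensor a b n) (Y : Tensor b c n) (Z : Tensor c d n) :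
    tprod (tprod X Y) Z = tprod X (tprod Y Z) := by
  funext m
  simp only [tprod, Matrix.sum_mul, Matrix.mul_sum]
  conv_rhs => rw [Finset.sum_comm]
  refine Finset.sum_congr rfl fun t _ => Fintype.sum_equiv (Equiv.addRight t) _ _ fun x => ?_
  rw [Equiv.coe_addRight, add_sub_cancel_right, sub_add_eq_sub_sub, sub_right_comm,
    Matrix.mul_assoc]

lemma tid_tprod (X : Tensor a b n) : tprod (tid a n) X = X := by
  funext m
  simp only [tprod, tid]
  rw [Finset.sum_eq_single m]
  · simp
  · intro j _ hj
    rw [if_neg (sub_ne_zero.mpr hj.symm), Matrix.zero_mul]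
  · simp

lemma tprod_tid (X : Tensor a b n) : tprod X (tid b n) = X := by
  funext m
  simp only [tprod, tid]
  rw [Finset.sum_eq_single 0]
  · simp
  · intro j _ hj
    rw [if_neg hj, Matrix.mul_zero]
  · simp

lemma ttrans_tprod (X : Tensor a b n) (Y : Tensor b c n) :
    ttrans (tprod X Y) = tprod (ttrans Y) (ttrans X) := by
  funext m
  simp only [ttrans, tprod, Matrix.transpose_sum, Matrix.transpose_mul]
  refine Fintype.sum_equiv (Equiv.addLeft m) _ _ fun j => ?_
  rw [Equiv.coe_addLeft, sub_add_cancel_left, neg_neg, neg_add, sub_eq_add_neg]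

omit [NeZero n] in
lemma ttrans_ttrans (X : Tensor a b n) : ttrans (ttrans X) = X := by
  funext m
  simp [ttrans]

omit [NeZero n] in
lemma ttrans_tid : ttrans (tid a n) = tid a n := by
  funext m
  simp only [ttrans, tid, neg_eq_zero]
  split <;> simp

lemma tprod_ttrans_eq_tid_of_tprod_eq_tid {A : Tensor a b n} {A' : Tensor b a n}
    (h : tprod A A' = tid a n) : tprod (ttrans A') (ttrans A) = tid a n := by
  rw [← ttrans_tprod, h, ttrans_tid]

lemma tprod_tprod_eq_tid_of_tprod_eq_tid {A : Tensor a b n} {A' : Tensor b a n}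
    {B : Tensor b c n} {B' : Tensor c b n}
    (hA : tprod A A' = tid a n) (hB : tprod B B' = tid b n) :
    tprod (tprod A B) (tprod B' A') = tid a n := by
  rw [tprod_assoc, ← tprod_assoc B, hB, tid_tprod, hA]

lemma tprod_left_inv_eq_right_inv {A : Tensor a b n} {L R : Tensor b a n}
    (hL : tprod L A = tid b n) (hR : tprod A R = tid a n) : L = R := by
  rw [← tprod_tid L, ← hR, ← tprod_assoc, hL, tid_tprod]

lemma ttrans_tprod_self_of_eq_tsvd {Y : Tensor a b n} {U : Tensor a c n}
    {S : Tensor c d n} {V : Tensor b d n} (hY : Y = tprod (tprod U S) (ttrans V))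
    (hU : tprod (ttrans U) U = tid c n) :
    tprod (ttrans Y) Y = tprod (tprod V (tprod (ttrans S) S)) (ttrans V) := by
  subst hY
  simp only [ttrans_tprod, ttrans_ttrans, tprod_assoc]
  rw [← tprod_assoc (ttrans U), hU, tid_tprod]

lemma trace_tprod_zero_comm (A : Tensor a b n) (B : Tensor b a n) :
    (tprod A B 0).trace = (tprod B A 0).trace := by
  simp only [tprod, Matrix.trace_sum, zero_sub]
  refine Fintype.sum_equiv (Equiv.neg _) _ _ fun j => ?_
  rw [Equiv.neg_apply, neg_neg, Matrix.trace_mul_comm]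

lemma frobSq_eq_trace_ttrans_tprod_zero (B : Tensor a b n) :
    frobSq B = (tprod (ttrans B) B 0).trace := by
  simp only [frobSq, tprod, ttrans, Matrix.trace_sum, zero_sub, neg_neg]
  refine Finset.sum_congr rfl fun k _ => ?_
  simp only [Matrix.trace, Matrix.diag_apply, Matrix.mul_apply, Matrix.transpose_apply, sq]
  exact Finset.sum_comm

end TProd

theorem fixed_precision_thm_general (I1 I2 I3 k : ℕ) [NeZero I3]
    (Y : Tensor I1 k I3)
    (W : Tensor I2 k I3)
    (U S V : Tensor _ _ I3)
    (hsvd : Y = tprod (tprod (U : Tensor I1 k I3) (S : Tensor k k I3))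
      (ttrans (V : Tensor k k I3)))
    (hU : tprod (ttrans U) U = tid k I3)
    (hV : Orthogonal V)
    (Sinv : Tensor k k I3)
    (hSinv : tprod S Sinv = tid k I3 ∧ tprod Sinv S = tid k I3)
    (Zinv : Tensor k k I3)
    (hZinv : tprod (tprod (ttrans Y) Y) Zinv = tid k I3 ∧
             tprod Zinv (tprod (ttrans Y) Y) = tid k I3)
    (Q : Tensor I1 k I3) (B : Tensor k I2 I3)
    (hQ : Q = tprod (tprod Y V) Sinv)
    (hB : B = ttrans (tprod (tprod W V) Sinv)) :
    tprod Q B = tprod (tprod Y Zinv) (ttrans W) ∧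
    frobSq B = Matrix.trace (tprod (tprod (ttrans W) W) Zinv 0) := by
  subst hQ hB
  have hSS : tprod (tprod (ttrans S) S) (tprod Sinv (ttrans Sinv)) = tid k I3 :=
    tprod_tprod_eq_tid_of_tprod_eq_tid (tprod_ttrans_eq_tid_of_tprod_eq_tid hSinv.2) hSinv.1
  have hGram : tprod (tprod (ttrans Y) Y)
      (tprod V (tprod (tprod Sinv (ttrans Sinv)) (ttrans V))) = tid k I3 := by
    rw [ttrans_tprod_self_of_eq_tsvd hsvd hU]
    exact tprod_tprod_eq_tid_of_tprod_eq_tid (tprod_tprod_eq_tid_of_tprod_eq_tid hV.2 hSS) hV.1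
  obtain rfl := tprod_left_inv_eq_right_inv hZinv.2 hGram
  constructor
  · simp only [ttrans_tprod, tprod_assoc]
  · rw [frobSq_eq_trace_ttrans_tprod_zero, ttrans_ttrans]
    conv_rhs => rw [tprod_assoc, trace_tprod_zero_comm]
    simp only [ttrans_tprod, tprod_assoc]

/-- Theorem 1 of the paper: with Q = Y*V̂*Ŝ⁻¹ and B = (W*V̂*Ŝ⁻¹)ᵀ,
one has Q*B = Y*(Yᵀ*Y)⁻¹*Wᵀ and ‖B‖_F² = trace of the first frontal slice of
Wᵀ*W*(Yᵀ*Y)⁻¹. -/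
theorem fixed_precision_thm (I1 I2 I3 k : ℕ) [NeZero I3]
    (X : Tensor I1 I2 I3) (Om : Tensor I2 k I3)
    (Y : Tensor I1 k I3) (hY : Y = tprod X Om)
    (hfull : ∀ i : ZMod I3, (dft Y i).rank = k)
    (W : Tensor I2 k I3) (hW : W = tprod (ttrans X) Y)
    (U S V : Tensor _ _ I3)
    (hsvd : Y = tprod (tprod (U : Tensor I1 k I3) (S : Tensor k k I3))
      (ttrans (V : Tensor k k I3)))
    (hU : tprod (ttrans U) U = tid k I3)
    (hV : Orthogonal V)
    (hS : fDiag S)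
    (Sinv : Tensor k k I3)
    (hSinv : tprod S Sinv = tid k I3 ∧ tprod Sinv S = tid k I3)
    (Zinv : Tensor k k I3)
    (hZinv : tprod (tprod (ttrans Y) Y) Zinv = tid k I3 ∧
             tprod Zinv (tprod (ttrans Y) Y) = tid k I3)
    (Q : Tensor I1 k I3) (B : Tensor k I2 I3)
    (hQ : Q = tprod (tprod Y V) Sinv)
    (hB : B = ttrans (tprod (tprod W V) Sinv)) :
    tprod Q B = tprod (tprod Y Zinv) (ttrans W) ∧
    frobSq B = Matrix.trace (tprod (tprod (ttrans W) W) Zinv 0) :=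
  fixed_precision_thm_general I1 I2 I3 k Y W U S V hsvd hU hV Sinv hSinv Zinv hZinv Q B hQ hB
end
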